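/- Let ν = {ν_t}_{t>0} be a factorizing family over [0,1]×{*}. Fix s,t>0 and for λ>0 put u = λ(s+t), u₁ = λs, u₂ = λt, and σ := (ν_{u₁}⊗ν_{u₂})∘⊕_{u₁,u₂}^{-1} on 𝒞_u^*. Define the block-occupancy events E_{00} = {∅}, E_{10} = {Z : Z∩[0,u₁] ≠ ∅, Z∩[u₁,u] = ∅}, E_{01} = {Z : Z∩[0,u₁] = ∅, Z∩[u₁,u] ≠ ∅}, E_{11} = {Z : Z∩[0,u₁] ≠ ∅, Z∩[u₁,u] ≠ ∅}. Assume there exist constants C < ∞ and λ₀ > 0 such that for all 0 < λ ≤ λ₀: (i) ν_u({Z ≠ ∅}) ≤ C·u and ν_{u_i}({Z ≠ ∅}) ≤ C·u_i for i = 1,2; (ii) ν_u(E_{11}) ≤ C·u²; (iii) |ν_u({∅}) − ν_{u₁}({∅})·ν_{u₂}({∅})| ≤ C·u²; (iv) d²_Hell(ν_u↾E_{10}, σ↾E_{10}) ≤ C·u² and d²_Hell(ν_u↾E_{01}, σ↾E_{01}) ≤ C·u². Then there exist C′ < ∞ and λ₀′ > 0 such that 1 − H(ν_u, σ) ≤ C′·u²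 for all 0 < λ ≤ λ₀′. -/

import Mathlib

open MeasureTheory Set
open scoped ENNReal NNReal

namespace RandomSets

variable (L : Type) [TopologicalSpace L]

/-- The time strip `[0,t] × L` inside `ℝ × L`. -/
def strip (t : ℝ) : Set (ℝ × L) := Set.Icc (0:ℝ) t ×ˢ (Set.univ : Set L)

lemma isClosed_strip (t : ℝ) : IsClosed (strip L t) :=
  isClosed_Icc.prod isClosed_univ

/-- Closed subsets of `[0,t] × L`, modeled as closed subsets of `ℝ × L`
contained in the strip `[0,t] × L`. -/
def Cl (t : ℝ) : Type := {F : Set (ℝ × L) // IsClosed F ∧ F ⊆ strip L t}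

variable {L}

lemma isClosed_fstImage (f g : ℝ → ℝ) (hg : Continuous g)
    (hgf : ∀ x, g (f x) = x) (hfg : ∀ x, f (g x) = x)
    {A : Set (ℝ × L)} (hA : IsClosed A) :
    IsClosed ((fun p : ℝ × L => (f p.1, p.2)) '' A) := by
  have h : (fun p : ℝ × L => (f p.1, p.2)) '' A
      = (fun p : ℝ × L => (g p.1, p.2)) ⁻¹' A := by
    ext p
    constructor
    · rintro ⟨q, hq, rfl⟩
      simpa [hgf] using hq
    · intro hp
      exact ⟨(g p.1, p.2), hp, by simp [hfg]⟩
  rw [h]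
  exact hA.preimage (by fun_prop)

variable (L)

/-- The Fell topology on `Cl L t`: generated by the hit sets of relatively open
subsets of the strip and the miss sets of compact subsets of the strip. -/
def fellTop (t : ℝ) : TopologicalSpace (Cl L t) :=
  TopologicalSpace.generateFrom
    ({S | ∃ U : Set (ℝ × L), IsOpen U ∧
        S = {F : Cl L t | (F.1 ∩ (U ∩ strip L t)).Nonempty}} ∪
     {S | ∃ K : Set (ℝ × L), IsCompact K ∧ K ⊆ strip L t ∧
        S = {F : Cl L t | F.1 ∩ K = ∅}})

instance (t : ℝ) : TopologicalSpace (Cl L t) := fellTop L t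

instance (t : ℝ) : MeasurableSpace (Cl L t) := borel (Cl L t)

/-- The empty closed set. -/
noncomputable def emptyCl (t : ℝ) : Cl L t := ⟨∅, isClosed_empty, Set.empty_subset _⟩

variable {L}

/-- Concatenation of a closed subset of `[0,s] × L` with a closed subset of
`[0,t] × L` (the latter translated by `s` in time), yielding a closed subset
of `[0,s+t] × L`. -/
noncomputable def concat (s t : ℝ) (Z₁ : Cl L s) (Z₂ : Cl L t) : Cl L (s + t) :=
  ⟨(Z₁.1 ∪ (fun p : ℝ × L => (p.1 + s, p.2)) '' Z₂.1) ∩ strip L (s + t), by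
    refine ⟨IsClosed.inter ?_ (isClosed_strip L _), Set.inter_subset_right⟩
    exact Z₁.2.1.union (isClosed_fstImage (· + s) (· - s) (by fun_prop)
      (fun x => by ring) (fun x => by ring) Z₂.2.1)⟩

/-- Concatenation as a map on pairs. -/
noncomputable def concatMap (s t : ℝ) : Cl L s × Cl L t → Cl L (s + t) :=
  fun p => concat s t p.1 p.2

/-- Transport along an equality of time horizons. -/
noncomputable def recast {a b : ℝ} (h : a = b) (Z : Cl L a) : Cl L b :=
  ⟨Z.1, Z.2.1, h ▸ Z.2.2⟩

/-- `Z ∩ ([0,s] × L)`, as a closed subset of `[0,s] × L`. -/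
noncomputable def initPart (s : ℝ) {w : ℝ} (Z : Cl L w) : Cl L s :=
  ⟨Z.1 ∩ strip L s, (Z.2.1.inter (isClosed_strip L s)), Set.inter_subset_right⟩

/-- `(Z ∩ ([s,s+t] × L)) - (s,0)`, as a closed subset of `[0,t] × L`. -/
noncomputable def tailPart (s t : ℝ) {w : ℝ} (Z : Cl L w) : Cl L t :=
  ⟨(fun p : ℝ × L => (p.1 - s, p.2)) '' (Z.1 ∩ (Set.Icc s (s + t) ×ˢ (Set.univ : Set L))), by
    constructor
    · exact isClosed_fstImage (· - s) (· + s) (by fun_prop)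
        (fun x => by ring) (fun x => by ring)
        (Z.2.1.inter (isClosed_Icc.prod isClosed_univ))
    · rintro p ⟨q, ⟨-, hq⟩, rfl⟩
      simp only [Set.mem_prod, Set.mem_Icc, Set.mem_univ, and_true] at hq
      simp only [strip, Set.mem_prod, Set.mem_Icc, Set.mem_univ, and_true]
      constructor <;> linarith [hq.1, hq.2]⟩

/-- Time rescaling `𝒞_t → 𝒞_1`, `Z ↦ {(r/t, ℓ) : (r,ℓ) ∈ Z}` (junk value for `t ≤ 0`). -/
noncomputable def timeScale (t : ℝ) (Z : Cl L t) : Cl L 1 :=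
  if ht : 0 < t then
    ⟨(fun p : ℝ × L => (p.1 / t, p.2)) '' Z.1, by
      constructor
      · exact isClosed_fstImage (· / t) (· * t)
          (by fun_prop) (fun x => div_mul_cancel₀ x ht.ne')
          (fun x => mul_div_cancel_right₀ x ht.ne') Z.2.1
      · rintro p ⟨q, hq, rfl⟩
        have h1 := Z.2.2 hq
        simp only [strip, Set.mem_prod, Set.mem_Icc, Set.mem_univ, and_true] at h1 ⊢
        exact ⟨div_nonneg h1.1 ht.le, (div_le_one ht).mpr h1.2⟩⟩
  else emptyCl L 1

/-- Definition 2.2 (i)–(ii): a factorizing family of probability measures over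
`[0,1] × L`. -/
def IsFactorizing (μ : (t : ℝ) → Measure (Cl L t)) : Prop :=
  (∀ t : ℝ, 0 < t → IsProbabilityMeasure (μ t)) ∧
  (∀ s t : ℝ, 0 < s → 0 < t →
    μ (s + t) ≪ Measure.map (concatMap s t) ((μ s).prod (μ t)) ∧
    Measure.map (concatMap s t) ((μ s).prod (μ t)) ≪ μ (s + t)) ∧
  (∀ t : ℝ, 0 < t → ∀ r ∈ Set.Icc (0:ℝ) t,
    μ t {Z : Cl L t | ∃ ℓ : L, (r, ℓ) ∈ Z.1} = 0)

/-- Definition 2.2 (i)–(iv): a measurable factorizing family. -/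
def IsMeasurableFactorizing (μ : (t : ℝ) → Measure (Cl L t)) : Prop :=
  IsFactorizing μ ∧
  (∀ t : ℝ, 0 < t → ∀ S : Finset (Cl L t), μ t ((↑S : Set (Cl L t))ᶜ) ≠ 0) ∧
  (∃ R : Set (Set (Cl L 1)), R.Countable ∧ MeasureTheory.IsSetRing R ∧
    MeasurableSpace.generateFrom R = (inferInstance : MeasurableSpace (Cl L 1)) ∧
    ∀ A ∈ R, Measurable fun t : Set.Ioi (0:ℝ) =>
      Measure.map (timeScale t.1) (μ t.1) A) ∧
  (∃ Δ : ℝ → ℝ → Cl L 1 → ℝ≥0∞,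
    Measurable (fun p : (ℝ × ℝ) × Cl L 1 => Δ p.1.1 p.1.2 p.2) ∧
    (∀ s t Z, 0 < Δ s t Z ∧ Δ s t Z < ⊤) ∧
    ∀ s t : ℝ, 0 < s → 0 < t →
      (fun Z => Δ s t (timeScale (s + t) Z)) =ᵐ[μ (s + t)]
        (Measure.map (concatMap s t) ((μ s).prod (μ t))).rnDeriv (μ (s + t)))


/-- The Hellinger affinity `H(ρ,η) = ∫ √((dρ/dm)(dη/dm)) dm` of two finite measures
(computed with the dominating measure `m = ρ + η`; it is independent of the choice
of dominating measure). -/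
noncomputable def hellingerAff {X : Type*} [MeasurableSpace X] (ρ η : Measure X) : ℝ :=
  (∫⁻ x, (ρ.rnDeriv (ρ + η) x * η.rnDeriv (ρ + η) x) ^ (1/2 : ℝ) ∂(ρ + η)).toReal

/-- The squared Hellinger distance `d²(ρ,η) = ρ(X) + η(X) - 2 H(ρ,η)`. -/
noncomputable def d2Hell {X : Type*} [MeasurableSpace X] (ρ η : Measure X) : ℝ :=
  (ρ Set.univ).toReal + (η Set.univ).toReal - 2 * hellingerAff ρ η

/-- The event that `Z` meets the time window `[a,b]` (over `[0,1] × {*}`). -/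
def hitsIcc (u a b : ℝ) : Set (Cl Unit u) :=
  {Z | (Z.1 ∩ (Set.Icc a b ×ˢ (Set.univ : Set Unit))).Nonempty}

/-- The event that `Z` misses the time window `[a,b]` (over `[0,1] × {*}`). -/
def missIcc (u a b : ℝ) : Set (Cl Unit u) :=
  {Z | Z.1 ∩ (Set.Icc a b ×ˢ (Set.univ : Set Unit)) = ∅}

/-!
Write `u = u₁ + u₂` and split `𝒞_u` along the events "misses `[0,u₁]`" and "misses `[u₁,u]`".
The squared Hellinger distance is additive over a measurable partition, and
`2 (1 - H(ν_u, σ)) = d²(ν_u, σ)` for probability measures. On the vacuum `{∅}` the restricted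
distance is `(√a - √b)² ≤ |a - b|`, controlled by (iii) since `σ{∅} = ν_{u₁}{∅} ν_{u₂}{∅}`; the
two one-block events are (iv); on the two-block event the distance is at most
`ν_u(E₁₁) + σ(E₁₁) ≤ C u² + C² u₁ u₂`, because a concatenation hits both blocks only if both
factors are nonempty or one of them charges a fixed time point, a null event.
-/

section Hellinger

variable {X : Type*} [MeasurableSpace X] {ρ η : Measure X}

noncomputable def hellingerDensity (ρ η : Measure X) (x : X) : ℝ≥0∞ :=
  (ρ.rnDeriv (ρ + η) x * η.rnDeriv (ρ + η) x) ^ (1/2 : ℝ)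

lemma hellingerAff_eq_lintegral (ρ η : Measure X) :
    hellingerAff ρ η = (∫⁻ x, hellingerDensity ρ η x ∂(ρ + η)).toReal := rfl

lemma measurable_hellingerDensity (ρ η : Measure X) : Measurable (hellingerDensity ρ η) :=
  ((Measure.measurable_rnDeriv _ _).mul (Measure.measurable_rnDeriv _ _)).pow_const _

lemma rpow_half_mul_self (x : ℝ≥0∞) : (x * x) ^ (1/2 : ℝ) = x := by
  rw [← sq, show (1/2 : ℝ) = ((2 : ℕ) : ℝ)⁻¹ by norm_num, ENNReal.pow_rpow_inv_natCast two_ne_zero]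

lemma rpow_half_mul_le_add (x y : ℝ≥0∞) : (x * y) ^ (1/2 : ℝ) ≤ x + y :=
  calc (x * y) ^ (1/2 : ℝ) ≤ ((x + y) * (x + y)) ^ (1/2 : ℝ) :=
        ENNReal.rpow_le_rpow (mul_le_mul' le_self_add le_add_self) (by norm_num)
    _ = x + y := rpow_half_mul_self _

lemma absolutelyContinuous_add_left (ρ η : Measure X) : ρ ≪ ρ + η :=
  Measure.AbsolutelyContinuous.rfl.add_right η

lemma absolutelyContinuous_add_right (ρ η : Measure X) : η ≪ ρ + η :=
  Measure.AbsolutelyContinuous.rfl.add_right' ρ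

lemma add_sub_two_mul_sqrt_mul_le_abs_sub {a b : ℝ} (ha : 0 ≤ a) (hb : 0 ≤ b) :
    a + b - 2 * √(a * b) ≤ |a - b| := by
  have hdiff : a - b = (√a - √b) * (√a + √b) := by
    rw [mul_comm, ← sq_sub_sq, Real.sq_sqrt ha, Real.sq_sqrt hb]
  have hsum : |√a - √b| ≤ √a + √b := by
    simpa [abs_of_nonneg (Real.sqrt_nonneg _)] using abs_sub (√a) (√b)
  calc a + b - 2 * √(a * b) = |√a - √b| * |√a - √b| := by
        rw [abs_mul_abs_self, Real.sqrt_mul ha]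
        nlinarith [Real.sq_sqrt ha, Real.sq_sqrt hb]
    _ ≤ |√a - √b| * (√a + √b) := mul_le_mul_of_nonneg_left hsum (abs_nonneg _)
    _ = |a - b| := by
        rw [hdiff, abs_mul, abs_of_nonneg (add_nonneg (Real.sqrt_nonneg a) (Real.sqrt_nonneg b))]

lemma d2Hell_restrict_le (ρ η : Measure X) (E : Set X) :
    d2Hell (ρ.restrict E) (η.restrict E) ≤ (ρ E).toReal + (η E).toReal := by
  have : 0 ≤ hellingerAff (ρ.restrict E) (η.restrict E) := ENNReal.toReal_nonneg
  rw [d2Hell, Measure.restrict_apply_univ, Measure.restrict_apply_univ]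
  linarith

lemma one_sub_hellingerAff_eq [IsProbabilityMeasure ρ] [IsProbabilityMeasure η] :
    1 - hellingerAff ρ η = d2Hell ρ η / 2 := by
  rw [d2Hell, measure_univ, measure_univ]
  norm_num
  ring

lemma rnDeriv_restrict_restrict_ae_eq [SigmaFinite ρ] {μ : Measure X} [SigmaFinite μ]
    (h : ρ ≪ μ) {E : Set X} (hE : MeasurableSet E) :
    (ρ.restrict E).rnDeriv (μ.restrict E) =ᵐ[μ.restrict E] ρ.rnDeriv μ := by
  have h1 : (μ.restrict E).withDensity (ρ.rnDeriv μ) = ρ.restrict E := by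
    rw [← restrict_withDensity hE, Measure.withDensity_rnDeriv_eq _ _ h]
  rw [← h1]
  exact Measure.rnDeriv_withDensity _ (Measure.measurable_rnDeriv _ _)

variable [IsFiniteMeasure ρ] [IsFiniteMeasure η]

lemma lintegral_hellingerDensity_ne_top :
    ∫⁻ x, hellingerDensity ρ η x ∂(ρ + η) ≠ ⊤ := by
  refine ne_top_of_le_ne_top ?_ (lintegral_mono fun x => rpow_half_mul_le_add _ _)
  rw [lintegral_add_left (Measure.measurable_rnDeriv _ _)]
  exact ENNReal.add_ne_top.mpr
    ⟨(Measure.lintegral_rnDeriv_le).trans_lt (measure_lt_top _ _) |>.ne,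
     (Measure.lintegral_rnDeriv_le).trans_lt (measure_lt_top _ _) |>.ne⟩

lemma hellingerAff_restrict {E : Set X} (hE : MeasurableSet E) :
    hellingerAff (ρ.restrict E) (η.restrict E)
      = (∫⁻ x in E, hellingerDensity ρ η x ∂(ρ + η)).toReal := by
  have hρ := rnDeriv_restrict_restrict_ae_eq (absolutelyContinuous_add_left ρ η) hE
  have hη := rnDeriv_restrict_restrict_ae_eq (absolutelyContinuous_add_right ρ η) hE
  simp only [hellingerAff_eq_lintegral, hellingerDensity, ← Measure.restrict_add]
  congr 1
  refine lintegral_congr_ae ?_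
  filter_upwards [hρ, hη] with x hxρ hxη
  rw [hxρ, hxη]

lemma hellingerAff_eq_add_compl {E : Set X} (hE : MeasurableSet E) :
    hellingerAff ρ η = hellingerAff (ρ.restrict E) (η.restrict E)
      + hellingerAff (ρ.restrict Eᶜ) (η.restrict Eᶜ) := by
  have hfin : ∀ F : Set X, ∫⁻ x in F, hellingerDensity ρ η x ∂(ρ + η) ≠ ⊤ := fun F =>
    ne_top_of_le_ne_top lintegral_hellingerDensity_ne_top (setLIntegral_le_lintegral _ _)
  rw [hellingerAff_restrict hE, hellingerAff_restrict hE.compl,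
    ← ENNReal.toReal_add (hfin E) (hfin Eᶜ), lintegral_add_compl _ hE, hellingerAff_eq_lintegral]

lemma d2Hell_eq_add_compl {E : Set X} (hE : MeasurableSet E) :
    d2Hell ρ η = d2Hell (ρ.restrict E) (η.restrict E)
      + d2Hell (ρ.restrict Eᶜ) (η.restrict Eᶜ) := by
  simp only [d2Hell, Measure.restrict_apply_univ]
  rw [hellingerAff_eq_add_compl hE, ← measure_add_measure_compl (μ := ρ) hE,
    ← measure_add_measure_compl (μ := η) hE, ENNReal.toReal_add (measure_ne_top _ _)
    (measure_ne_top _ _), ENNReal.toReal_add (measure_ne_top _ _) (measure_ne_top _ _)]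
  ring

lemma d2Hell_eq_add_add_add {E F : Set X} (hE : MeasurableSet E) (hF : MeasurableSet F) :
    d2Hell ρ η = d2Hell (ρ.restrict (E ∩ F)) (η.restrict (E ∩ F))
      + d2Hell (ρ.restrict (Eᶜ ∩ F)) (η.restrict (Eᶜ ∩ F))
      + d2Hell (ρ.restrict (E ∩ Fᶜ)) (η.restrict (E ∩ Fᶜ))
      + d2Hell (ρ.restrict (Eᶜ ∩ Fᶜ)) (η.restrict (Eᶜ ∩ Fᶜ)) := by
  rw [d2Hell_eq_add_compl hF, d2Hell_eq_add_compl (ρ := ρ.restrict F) hE,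
    d2Hell_eq_add_compl (ρ := ρ.restrict Fᶜ) hE]
  simp only [Measure.restrict_restrict hE, Measure.restrict_restrict hE.compl]
  ring

lemma hellingerAff_restrict_singleton {z : X} (hz : MeasurableSet ({z} : Set X)) :
    hellingerAff (ρ.restrict {z}) (η.restrict {z}) = √((ρ {z}).toReal * (η {z}).toReal) := by
  have hmass : ∀ μ : Measure X, [IsFiniteMeasure μ] → μ ≪ ρ + η →
      μ {z} = μ.rnDeriv (ρ + η) z * (ρ + η) {z} := fun μ _ hμ => by
    rw [← lintegral_singleton' (Measure.measurable_rnDeriv _ _),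
      Measure.setLIntegral_rnDeriv' hμ hz]
  have hdensity : hellingerDensity ρ η z * (ρ + η) {z} = (ρ {z} * η {z}) ^ (1/2 : ℝ) := by
    rw [hmass ρ (absolutelyContinuous_add_left ρ η), hmass η (absolutelyContinuous_add_right ρ η),
      mul_mul_mul_comm, ENNReal.mul_rpow_of_nonneg _ _ (by norm_num), rpow_half_mul_self, hellingerDensity]
  rw [hellingerAff_restrict hz, lintegral_singleton' (measurable_hellingerDensity ρ η), hdensity,
    ← ENNReal.toReal_rpow, ENNReal.toReal_mul, Real.sqrt_eq_rpow]

lemma d2Hell_restrict_singleton_le {z : X} (hz : MeasurableSet ({z} : Set X)) :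
    d2Hell (ρ.restrict {z}) (η.restrict {z}) ≤ |(ρ {z}).toReal - (η {z}).toReal| := by
  rw [d2Hell, hellingerAff_restrict_singleton hz, Measure.restrict_apply_univ,
    Measure.restrict_apply_univ]
  exact add_sub_two_mul_sqrt_mul_le_abs_sub ENNReal.toReal_nonneg ENNReal.toReal_nonneg

end Hellinger

section Blocks

instance (t : ℝ) : BorelSpace (Cl L t) := ⟨rfl⟩

lemma isOpen_missIcc {u a b : ℝ} (ha : 0 ≤ a) (hb : b ≤ u) : IsOpen (missIcc u a b) := by
  refine TopologicalSpace.isOpen_generateFrom_of_mem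
    (Or.inr ⟨_, isCompact_Icc.prod isCompact_univ, ?_, rfl⟩)
  rintro ⟨x, ℓ⟩ ⟨hx, -⟩
  exact ⟨⟨ha.trans hx.1, hx.2.trans hb⟩, trivial⟩

lemma measurableSet_missIcc {u a b : ℝ} (ha : 0 ≤ a) (hb : b ≤ u) :
    MeasurableSet (missIcc u a b) :=
  (isOpen_missIcc ha hb).measurableSet

lemma compl_missIcc (u a b : ℝ) : (missIcc u a b)ᶜ = hitsIcc u a b := by
  ext Z
  simp [hitsIcc, missIcc, nonempty_iff_ne_empty]

lemma measurableSet_hitsIcc {u a b : ℝ} (ha : 0 ≤ a) (hb : b ≤ u) :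
    MeasurableSet (hitsIcc u a b) :=
  compl_missIcc u a b ▸ (measurableSet_missIcc ha hb).compl

lemma eq_emptyCl_iff {t : ℝ} {Z : Cl L t} : Z = emptyCl L t ↔ Z.1 = ∅ :=
  Subtype.ext_iff

lemma missIcc_inter_missIcc (u v : ℝ) :
    missIcc u 0 v ∩ missIcc u v u = {emptyCl Unit u} := by
  ext Z
  refine ⟨fun ⟨hleft, hright⟩ => eq_emptyCl_iff.mpr (eq_empty_of_forall_notMem fun p hp => ?_),
    fun hZ => ?_⟩
  · obtain ⟨⟨hp0, hpu⟩, -⟩ := Z.2.2 hp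
    rcases le_total p.1 v with hpv | hpv
    · exact (eq_empty_iff_forall_notMem.mp hleft) p ⟨hp, ⟨hp0, hpv⟩, trivial⟩
    · exact (eq_empty_iff_forall_notMem.mp hright) p ⟨hp, ⟨hpv, hpu⟩, trivial⟩
  · rw [mem_singleton_iff.mp hZ]
    exact ⟨empty_inter _, empty_inter _⟩

lemma measurableSet_singleton_emptyCl {u : ℝ} (hu : 0 ≤ u) :
    MeasurableSet ({emptyCl Unit u} : Set (Cl Unit u)) :=
  missIcc_inter_missIcc u 0 ▸ (measurableSet_missIcc le_rfl hu).inter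
    (measurableSet_missIcc le_rfl le_rfl)

lemma coe_concat {u₁ u₂ : ℝ} (h₁ : 0 ≤ u₁) (h₂ : 0 ≤ u₂) (Z₁ : Cl L u₁) (Z₂ : Cl L u₂) :
    (concat u₁ u₂ Z₁ Z₂).1 = Z₁.1 ∪ (fun p : ℝ × L => (p.1 + u₁, p.2)) '' Z₂.1 := by
  refine inter_eq_left.mpr (union_subset (fun p hp => ?_) ?_)
  · obtain ⟨⟨hp0, hp1⟩, -⟩ := Z₁.2.2 hp
    exact ⟨⟨hp0, by linarith⟩, trivial⟩
  · rintro _ ⟨p, hp, rfl⟩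
    obtain ⟨⟨hp0, hp1⟩, -⟩ := Z₂.2.2 hp
    exact ⟨⟨by linarith, by linarith⟩, trivial⟩

lemma concatMap_preimage_singleton_emptyCl {u₁ u₂ : ℝ} (h₁ : 0 ≤ u₁) (h₂ : 0 ≤ u₂) :
    concatMap u₁ u₂ ⁻¹' {emptyCl L (u₁ + u₂)} = {emptyCl L u₁} ×ˢ {emptyCl L u₂} := by
  ext ⟨Z₁, Z₂⟩
  change concat u₁ u₂ Z₁ Z₂ = emptyCl L _ ↔ Z₁ = emptyCl L u₁ ∧ Z₂ = emptyCl L u₂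
  rw [eq_emptyCl_iff, eq_emptyCl_iff, eq_emptyCl_iff, coe_concat h₁ h₂, union_empty_iff,
    image_eq_empty]

lemma concatMap_preimage_hitsIcc_inter_hitsIcc_subset {u₁ u₂ : ℝ} (h₁ : 0 ≤ u₁) (h₂ : 0 ≤ u₂) :
    concatMap u₁ u₂ ⁻¹' (hitsIcc (u₁ + u₂) 0 u₁ ∩ hitsIcc (u₁ + u₂) u₁ (u₁ + u₂))
      ⊆ {Z : Cl Unit u₁ | Z.1.Nonempty} ×ˢ {Z : Cl Unit u₂ | Z.1.Nonempty}
        ∪ univ ×ˢ {Z : Cl Unit u₂ | ∃ ℓ : Unit, ((0 : ℝ), ℓ) ∈ Z.1}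
        ∪ {Z : Cl Unit u₁ | ∃ ℓ : Unit, (u₁, ℓ) ∈ Z.1} ×ˢ univ := by
  rintro ⟨Z₁, Z₂⟩ ⟨⟨p, hp, hpI, -⟩, ⟨q, hq, hqI, -⟩⟩
  simp only [concatMap, coe_concat h₁ h₂] at hp hq
  have hleft : Z₁.1.Nonempty ∨ ∃ ℓ : Unit, ((0 : ℝ), ℓ) ∈ Z₂.1 := by
    rcases hp with hp | ⟨⟨x, ℓ⟩, hx, rfl⟩
    · exact Or.inl ⟨p, hp⟩
    · obtain ⟨⟨hx0, -⟩, -⟩ := Z₂.2.2 hx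
      obtain rfl : x = 0 := by simp only at hpI; linarith [hpI.2]
      exact Or.inr ⟨ℓ, hx⟩
  have hright : Z₂.1.Nonempty ∨ ∃ ℓ : Unit, (u₁, ℓ) ∈ Z₁.1 := by
    rcases hq with hq | ⟨r, hr, -⟩
    · obtain ⟨⟨-, hqu⟩, -⟩ := Z₁.2.2 hq
      obtain ⟨x, ℓ⟩ := q
      obtain rfl : x = u₁ := le_antisymm hqu hqI.1
      exact Or.inr ⟨ℓ, hq⟩
    · exact Or.inl ⟨r, hr⟩
  rcases hleft with hZ₁ | h0
  · rcases hright with hZ₂ | hu₁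
    · exact Or.inl (Or.inl ⟨hZ₁, hZ₂⟩)
    · exact Or.inr ⟨hu₁, trivial⟩
  · exact Or.inl (Or.inr ⟨trivial, h0⟩)

end Blocks

noncomputable def concatLaw (ν : (t : ℝ) → Measure (Cl L t)) (s t : ℝ) : Measure (Cl L (s + t)) :=
  Measure.map (concatMap s t) ((ν s).prod (ν t))

section Factorizing

variable {ν : (t : ℝ) → Measure (Cl L t)}

/- `concatMap` is not known to be measurable; a.e.-measurability comes from `ν (s + t) ≪ concatLaw`,
since the image of a measure under a map that is not a.e.-measurable is zero. -/
lemma IsFactorizing.aemeasurable_concatMap (hν : IsFactorizing ν) {s t : ℝ} (hs : 0 < s)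
    (ht : 0 < t) : AEMeasurable (concatMap s t) ((ν s).prod (ν t)) := by
  by_contra h
  have := hν.1 (s + t) (add_pos hs ht)
  have hac := (hν.2.1 s t hs ht).1
  rw [Measure.map_of_not_aemeasurable h, Measure.absolutelyContinuous_zero_iff] at hac
  exact IsProbabilityMeasure.ne_zero _ hac

lemma IsFactorizing.isProbabilityMeasure_concatLaw (hν : IsFactorizing ν) {s t : ℝ} (hs : 0 < s)
    (ht : 0 < t) : IsProbabilityMeasure (concatLaw ν s t) :=
  have := hν.1 s hs
  have := hν.1 t ht
  Measure.isProbabilityMeasure_map (hν.aemeasurable_concatMap hs ht)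

end Factorizing

section UnitFactorizing

variable {ν : (t : ℝ) → Measure (Cl Unit t)}

lemma IsFactorizing.concatLaw_singleton_emptyCl (hν : IsFactorizing ν) {s t : ℝ} (hs : 0 < s)
    (ht : 0 < t) :
    concatLaw ν s t {emptyCl Unit (s + t)} = ν s {emptyCl Unit s} * ν t {emptyCl Unit t} := by
  have := hν.1 t ht
  rw [concatLaw, Measure.map_apply_of_aemeasurable (hν.aemeasurable_concatMap hs ht)
    (measurableSet_singleton_emptyCl (add_pos hs ht).le),
    concatMap_preimage_singleton_emptyCl hs.le ht.le, Measure.prod_prod]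

lemma IsFactorizing.concatLaw_hitsIcc_inter_hitsIcc_le (hν : IsFactorizing ν) {s t : ℝ}
    (hs : 0 < s) (ht : 0 < t) :
    concatLaw ν s t (hitsIcc (s + t) 0 s ∩ hitsIcc (s + t) s (s + t))
      ≤ ν s {Z | Z.1.Nonempty} * ν t {Z | Z.1.Nonempty} := by
  have := hν.1 t ht
  have hnull₁ : ν s {Z | ∃ ℓ : Unit, (s, ℓ) ∈ Z.1} = 0 := hν.2.2 s hs s ⟨hs.le, le_rfl⟩
  have hnull₂ : ν t {Z | ∃ ℓ : Unit, ((0 : ℝ), ℓ) ∈ Z.1} = 0 := hν.2.2 t ht 0 ⟨le_rfl, ht.le⟩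
  rw [concatLaw, Measure.map_apply_of_aemeasurable (hν.aemeasurable_concatMap hs ht)
    ((measurableSet_hitsIcc le_rfl (by linarith)).inter (measurableSet_hitsIcc hs.le le_rfl))]
  refine (measure_mono (concatMap_preimage_hitsIcc_inter_hitsIcc_subset hs.le ht.le)).trans
    ((measure_union_le _ _).trans ((add_le_add_left (measure_union_le _ _) _).trans ?_))
  rw [Measure.prod_prod, Measure.prod_prod, Measure.prod_prod, hnull₁, hnull₂, mul_zero, zero_mul,
    add_zero, add_zero]

lemma IsFactorizing.one_sub_hellingerAff_concatLaw_le (hν : IsFactorizing ν) {u₁ u₂ ε : ℝ}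
    (hu₁ : 0 < u₁) (hu₂ : 0 < u₂)
    (hboth : (ν (u₁ + u₂)
      (hitsIcc (u₁ + u₂) 0 u₁ ∩ hitsIcc (u₁ + u₂) u₁ (u₁ + u₂))).toReal ≤ ε)
    (hvacuum : |(ν (u₁ + u₂) {emptyCl Unit (u₁ + u₂)}).toReal
      - (ν u₁ {emptyCl Unit u₁}).toReal * (ν u₂ {emptyCl Unit u₂}).toReal| ≤ ε)
    (hfirst : d2Hell
      ((ν (u₁ + u₂)).restrict (hitsIcc (u₁ + u₂) 0 u₁ ∩ missIcc (u₁ + u₂) u₁ (u₁ + u₂)))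
      ((concatLaw ν u₁ u₂).restrict (hitsIcc (u₁ + u₂) 0 u₁ ∩ missIcc (u₁ + u₂) u₁ (u₁ + u₂)))
        ≤ ε)
    (hsecond : d2Hell
      ((ν (u₁ + u₂)).restrict (missIcc (u₁ + u₂) 0 u₁ ∩ hitsIcc (u₁ + u₂) u₁ (u₁ + u₂)))
      ((concatLaw ν u₁ u₂).restrict (missIcc (u₁ + u₂) 0 u₁ ∩ hitsIcc (u₁ + u₂) u₁ (u₁ + u₂)))
        ≤ ε) :
    1 - hellingerAff (ν (u₁ + u₂)) (concatLaw ν u₁ u₂)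
      ≤ 2 * ε + (ν u₁ {Z | Z.1.Nonempty}).toReal * (ν u₂ {Z | Z.1.Nonempty}).toReal / 2 := by
  have := hν.1 u₁ hu₁
  have := hν.1 u₂ hu₂
  have := hν.1 (u₁ + u₂) (add_pos hu₁ hu₂)
  have := hν.isProbabilityMeasure_concatLaw hu₁ hu₂
  have hmiss₁ := measurableSet_missIcc (u := u₁ + u₂) le_rfl (by linarith : u₁ ≤ u₁ + u₂)
  have hmiss₂ := measurableSet_missIcc (u := u₁ + u₂) hu₁.le le_rfl
  have hvacuumBlock := d2Hell_restrict_singleton_le (ρ := ν (u₁ + u₂)) (η := concatLaw ν u₁ u₂)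
    (measurableSet_singleton_emptyCl (add_pos hu₁ hu₂).le)
  rw [hν.concatLaw_singleton_emptyCl hu₁ hu₂, ENNReal.toReal_mul] at hvacuumBlock
  set both := hitsIcc (u₁ + u₂) 0 u₁ ∩ hitsIcc (u₁ + u₂) u₁ (u₁ + u₂)
  have hbothLaw : (concatLaw ν u₁ u₂ both).toReal
      ≤ (ν u₁ {Z | Z.1.Nonempty}).toReal * (ν u₂ {Z | Z.1.Nonempty}).toReal := by
    rw [← ENNReal.toReal_mul]
    exact ENNReal.toReal_mono (by finiteness) (hν.concatLaw_hitsIcc_inter_hitsIcc_le hu₁ hu₂)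
  have hbothBlock := d2Hell_restrict_le (ν (u₁ + u₂)) (concatLaw ν u₁ u₂) both
  rw [one_sub_hellingerAff_eq, d2Hell_eq_add_add_add hmiss₁ hmiss₂, missIcc_inter_missIcc,
    compl_missIcc, compl_missIcc]
  linarith [le_abs_self ((ν (u₁ + u₂) {emptyCl Unit (u₁ + u₂)}).toReal
    - (ν u₁ {emptyCl Unit u₁}).toReal * (ν u₂ {emptyCl Unit u₂}).toReal)]

end UnitFactorizing

/-- Proposition 4.14: a sufficient criterion for Hellinger
smallness, in terms of block-occupancy events.  Fix `s,t > 0`; for `λ > 0` write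
`u = λs + λt`, `u₁ = λs`, `u₂ = λt`, and `σ = (ν_{u₁} ⊗ ν_{u₂}) ∘ ⊕⁻¹`.  If (i) the
nonemptiness probabilities are linearly small, (ii) the two-block event is
quadratically small, (iii) the vacuum weight is consistent to second order, and
(iv) the one-block squared Hellinger distances are quadratically small, then
`1 - H(ν_u, σ) = O(u²)` as `λ ↓ 0`. -/
theorem hellinger_small_criterion
    (ν : (t : ℝ) → Measure (Cl Unit t)) (hν : IsFactorizing ν)
    (s t : ℝ) (hs : 0 < s) (ht : 0 < t)
    (C lam0 : ℝ) (hlam0 : 0 < lam0)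
    (h1 : ∀ lam : ℝ, 0 < lam → lam ≤ lam0 →
      ν (lam * s + lam * t) {Z : Cl Unit (lam * s + lam * t) | Z.1.Nonempty}
          ≤ ENNReal.ofReal (C * (lam * s + lam * t)) ∧
      ν (lam * s) {Z : Cl Unit (lam * s) | Z.1.Nonempty}
          ≤ ENNReal.ofReal (C * (lam * s)) ∧
      ν (lam * t) {Z : Cl Unit (lam * t) | Z.1.Nonempty}
          ≤ ENNReal.ofReal (C * (lam * t)))
    (h2 : ∀ lam : ℝ, 0 < lam → lam ≤ lam0 →
      ν (lam * s + lam * t)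
          (hitsIcc (lam * s + lam * t) 0 (lam * s) ∩
           hitsIcc (lam * s + lam * t) (lam * s) (lam * s + lam * t))
        ≤ ENNReal.ofReal (C * (lam * s + lam * t) ^ 2))
    (h3 : ∀ lam : ℝ, 0 < lam → lam ≤ lam0 →
      |(ν (lam * s + lam * t) {emptyCl Unit (lam * s + lam * t)}).toReal -
          (ν (lam * s) {emptyCl Unit (lam * s)}).toReal *
          (ν (lam * t) {emptyCl Unit (lam * t)}).toReal|
        ≤ C * (lam * s + lam * t) ^ 2)
    (h4 : ∀ lam : ℝ, 0 < lam → lam ≤ lam0 →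
      d2Hell
          ((ν (lam * s + lam * t)).restrict
            (hitsIcc (lam * s + lam * t) 0 (lam * s) ∩
             missIcc (lam * s + lam * t) (lam * s) (lam * s + lam * t)))
          ((Measure.map (concatMap (lam * s) (lam * t))
              ((ν (lam * s)).prod (ν (lam * t)))).restrict
            (hitsIcc (lam * s + lam * t) 0 (lam * s) ∩
             missIcc (lam * s + lam * t) (lam * s) (lam * s + lam * t)))
        ≤ C * (lam * s + lam * t) ^ 2 ∧
      d2Hell
          ((ν (lam * s + lam * t)).restrict
            (missIcc (lam * s + lam * t) 0 (lam * s) ∩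
             hitsIcc (lam * s + lam * t) (lam * s) (lam * s + lam * t)))
          ((Measure.map (concatMap (lam * s) (lam * t))
              ((ν (lam * s)).prod (ν (lam * t)))).restrict
            (missIcc (lam * s + lam * t) 0 (lam * s) ∩
             hitsIcc (lam * s + lam * t) (lam * s) (lam * s + lam * t)))
        ≤ C * (lam * s + lam * t) ^ 2) :
    ∃ C' lam0' : ℝ, 0 < lam0' ∧ ∀ lam : ℝ, 0 < lam → lam ≤ lam0' →
      1 - hellingerAff (ν (lam * s + lam * t))
            (Measure.map (concatMap (lam * s) (lam * t))
              ((ν (lam * s)).prod (ν (lam * t))))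
        ≤ C' * (lam * s + lam * t) ^ 2 := by
  have hC : 0 ≤ C := by
    have hvacuum := (abs_nonneg _).trans (h3 lam0 hlam0 le_rfl)
    exact nonneg_of_mul_nonneg_left hvacuum (by positivity)
  refine ⟨2 * C + C ^ 2 / 2, lam0, hlam0, fun lam hlam hle => ?_⟩
  have hu₁ : 0 < lam * s := mul_pos hlam hs
  have hu₂ : 0 < lam * t := mul_pos hlam ht
  obtain ⟨-, hN₁, hN₂⟩ := h1 lam hlam hle
  obtain ⟨hfirst, hsecond⟩ := h4 lam hlam hle
  have hboth := ENNReal.toReal_le_of_le_ofReal (mul_nonneg hC (sq_nonneg _)) (h2 lam hlam hle)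
  have hnonempty : (ν (lam * s) {Z | Z.1.Nonempty}).toReal * (ν (lam * t) {Z | Z.1.Nonempty}).toReal
      ≤ C ^ 2 * (lam * s + lam * t) ^ 2 :=
    calc _ ≤ C * (lam * s) * (C * (lam * t)) :=
          mul_le_mul (ENNReal.toReal_le_of_le_ofReal (by positivity) hN₁)
            (ENNReal.toReal_le_of_le_ofReal (by positivity) hN₂) ENNReal.toReal_nonneg
            (by positivity)
      _ ≤ C ^ 2 * (lam * s + lam * t) ^ 2 := by
          nlinarith [mul_nonneg (sq_nonneg C) (add_nonneg (sq_nonneg (lam * s))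
            (add_nonneg (sq_nonneg (lam * t)) (mul_pos hu₁ hu₂).le))]
  have key := hν.one_sub_hellingerAff_concatLaw_le hu₁ hu₂ hboth (h3 lam hlam hle) hfirst hsecond
  rw [concatLaw] at key
  linarith

end RandomSets
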